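/- Let f : ℝ^m × ℝ^n → ℝ and h : ℝ^m × ℝ^n → ℝ be continuous, let f*(x) = inf{ f(x,y) : y ∈ ℝ^n, h(x,y) ≤ 0 }, and suppose 0 is not a local optimal value of h with respect to y: for every x and every y with h(x,y) = 0, every neighborhood of y contains a point y' with h(x,y') < 0. Fix x̄ with { y : h(x̄,y) ≤ 0 } nonempty and f*(x̄) finite. Then for every ε > 0 there exist ŷ ∈ ℝ^n and δ > 0 such that f(x̄,ŷ) < f*(x̄) + ε and h(x̄,ŷ) ≤ −δ; that is, the infimum f*(x̄) can be approximated arbitrarily well by strictly feasible points. -/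

import Mathlib

open Filter Topology

noncomputable section

/-- `ℝ^m` as a Euclidean space. -/
abbrev Evec (m : ℕ) := EuclideanSpace ℝ (Fin m)

/-- The lower-level value function `f*(x) = inf { f(x,y) : h(x,y) ≤ 0 }`,
taken in the extended reals (so `inf ∅ = +∞`). -/
def lowerValue {m n : ℕ} (f h : Evec m → Evec n → ℝ) (x : Evec m) : EReal :=
  ⨅ y ∈ {y : Evec n | h x y ≤ 0}, ((f x y : ℝ) : EReal)

end

/- Strict feasibility is dense in the feasible set: a boundary point `h x̄ y = 0` is a limit of
points with `h x̄ y' < 0`. The infimum of the continuous function `f x̄` over a set is unchanged by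
passing to a subset that is dense in it, so `f*(x̄)` is already the infimum over strictly feasible
points, and any strictly feasible `ŷ` with `f x̄ ŷ < f*(x̄) + ε` works with `δ = -h x̄ ŷ`. -/

theorem EReal.lt_add_of_pos {x : EReal} (hx : x ≠ ⊤) (hx' : x ≠ ⊥) {ε : ℝ} (hε : 0 < ε) :
    x < x + ε := by
  lift x to ℝ using ⟨hx, hx'⟩
  exact_mod_cast lt_add_of_pos_right x hε

theorem biInf_eq_of_subset_closure {X α : Type*} [TopologicalSpace X] [CompleteLinearOrder α]
    [TopologicalSpace α] [OrderClosedTopology α] {φ : X → α} (hφ : Continuous φ) {s t : Set X}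
    (hts : t ⊆ s) (hsc : s ⊆ closure t) :
    ⨅ y ∈ s, φ y = ⨅ y ∈ t, φ y := by
  refine le_antisymm (biInf_mono hts) (le_iInf₂ fun y hy => ?_)
  have hclosed : IsClosed {z | ⨅ y ∈ t, φ y ≤ φ z} := isClosed_le continuous_const hφ
  exact hclosed.closure_subset_iff.2 (fun z hz => biInf_le φ hz) (hsc hy)

theorem setOf_nonpos_subset_closure_setOf_neg {E : Type*} [SeminormedAddCommGroup E] {c : E → ℝ}
    (hc : ∀ y, c y = 0 → ∀ ε > (0 : ℝ), ∃ y', ‖y' - y‖ < ε ∧ c y' < 0) :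
    {y | c y ≤ 0} ⊆ closure {y | c y < 0} := by
  intro y hy
  rcases (show c y ≤ 0 from hy).lt_or_eq with hneg | hzero
  · exact subset_closure hneg
  · refine Metric.mem_closure_iff.2 fun ε hε => ?_
    obtain ⟨y', hy'y, hy'⟩ := hc y hzero ε hε
    exact ⟨y', hy', by rwa [dist_eq_norm, norm_sub_rev]⟩

theorem strictly_feasible_approximation
    {m n : ℕ} (f h : Evec m → Evec n → ℝ)
    (hfc : Continuous fun p : Evec m × Evec n => f p.1 p.2)
    -- 0 is not a local optimal value of h with respect to y:
    (hA3 : ∀ (x : Evec m) (y : Evec n), h x y = 0 →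
      ∀ ε > (0 : ℝ), ∃ y', ‖y' - y‖ < ε ∧ h x y' < 0)
    (xbar : Evec m)
    (hfin : lowerValue f h xbar ≠ ⊤ ∧ lowerValue f h xbar ≠ ⊥) :
    ∀ ε > (0 : ℝ), ∃ (yhat : Evec n) (δ : ℝ), 0 < δ ∧
      ((f xbar yhat : ℝ) : EReal) < lowerValue f h xbar + (ε : EReal) ∧
      h xbar yhat ≤ -δ := by
  intro ε hε
  have hcont : Continuous fun y => ((f xbar y : ℝ) : EReal) :=
    continuous_coe_real_ereal.comp (hfc.comp (Continuous.prodMk_right xbar))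
  have hstrict : lowerValue f h xbar = ⨅ y ∈ {y | h xbar y < 0}, ((f xbar y : ℝ) : EReal) :=
    biInf_eq_of_subset_closure hcont (Set.ofPred_subset_ofPred.2 fun _ => le_of_lt)
      (setOf_nonpos_subset_closure_setOf_neg (hA3 xbar))
  have hlt := hstrict.symm.trans_lt (EReal.lt_add_of_pos hfin.1 hfin.2 hε)
  simp only [iInf_lt_iff] at hlt
  obtain ⟨y, hy, hfy⟩ := hlt
  exact ⟨y, -h xbar y, neg_pos.2 hy, hfy, (neg_neg _).ge⟩
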